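/- Let G be a graph with no degree-choosable component of radius at most r and let T be the unique depth-r BFS tree rooted at v. Suppose u is a vertex at level t ≤ r−1 whose children in T form several maximal cliques C_1,…,C_k with k ≥ 2. Then there is no edge of G between distinct cliques C_i and C_j. -/
import Mathlib


open SimpleGraph

def IsOddCycle {V : Type*} (G : SimpleGraph V) : Prop :=
  G.Connected ∧ (∀ v, (G.neighborSet v).ncard = 2) ∧ Odd (Nat.card V)

def TwoConnected {V : Type*} (G : SimpleGraph V) : Prop :=
  3 ≤ Nat.card V ∧ ∀ v : V, (G.induce {w : V | w ≠ v}).Connected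

def DegreeChoosable {V : Type*} (G : SimpleGraph V) : Prop :=
  ∀ L : V → Finset ℕ, (∀ v, (G.neighborSet v).ncard ≤ (L v).card) →
    ∃ c : V → ℕ, (∀ v, c v ∈ L v) ∧ ∀ u w, G.Adj u w → c u ≠ c w

def IsDCC {V : Type*} (G : SimpleGraph V) (S : Set V) : Prop :=
  TwoConnected (G.induce S) ∧ G.induce S ≠ ⊤ ∧ ¬ IsOddCycle (G.induce S)

def RadiusLE {V : Type*} (G : SimpleGraph V) (S : Set V) (r : ℕ) : Prop :=
  ∃ u : S, ∀ w : S, (G.induce S).dist u w ≤ r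

def NoSmallDCC {V : Type*} (G : SimpleGraph V) (r : ℕ) : Prop :=
  ∀ S : Set V, IsDCC G S → ¬ RadiusLE G S r

def gball {V : Type*} (G : SimpleGraph V) (v : V) (r : ℕ) : Set V :=
  {u | G.Reachable v u ∧ G.dist v u ≤ r}

noncomputable def childCount {V : Type*} (G : SimpleGraph V) (v u : V) : ℕ :=
  {w | G.Adj u w ∧ G.dist v w = G.dist v u + 1}.ncard

lemma diamond_dcc {V : Type*} [Fintype V] (G : SimpleGraph V) (u p q c : V)
    (hup : G.Adj u p) (huq : G.Adj u q) (huc : G.Adj u c)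
    (hcp : G.Adj c p) (hcq : G.Adj c q) (hpq : ¬ G.Adj p q) (hpqne : p ≠ q) :
    IsDCC G {u, p, q, c} ∧
      ∀ w : ({u, p, q, c} : Set V), (G.induce {u, p, q, c}).dist ⟨u, by simp⟩ w ≤ 1 := by
  have hu : u ∈ ({u, p, q, c} : Set V) := by simp
  have hp : p ∈ ({u, p, q, c} : Set V) := by simp
  have hq : q ∈ ({u, p, q, c} : Set V) := by simp
  have hc : c ∈ ({u, p, q, c} : Set V) := by simp
  have hcard : Nat.card ({u, p, q, c} : Set V) = 4 := by
    rw [Nat.card_coe_set_eq]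
    rw [Set.ncard_insert_of_notMem (by simp [hup.ne, huq.ne, huc.ne]),
      Set.ncard_insert_of_notMem (by simp [hpqne, hcp.ne']),
      Set.ncard_pair hcq.ne']
  have hubu : ∀ y ∈ ({u, p, q, c} : Set V), y ≠ u → G.Adj u y := by
    intro y hy hyu
    rcases hy with rfl | rfl | rfl | rfl
    · exact absurd rfl hyu
    · exact hup
    · exact huq
    · exact huc
  refine ⟨⟨⟨by omega, ?_⟩, ?_, ?_⟩, ?_⟩
  · -- 2-connectivity: remove any vertex x
    intro x
    by_cases hx : (x : V) = u
    · -- hub is c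
      have hcx : (⟨c, hc⟩ : ({u, p, q, c} : Set V)) ≠ x := by
        intro e; exact huc.ne' ((Subtype.ext_iff.1 e).trans hx)
      haveI : Nonempty ↑{w : ({u, p, q, c} : Set V) | w ≠ x} := ⟨⟨⟨c, hc⟩, hcx⟩⟩
      have reach : ∀ y : {w : ({u, p, q, c} : Set V) | w ≠ x},
          ((G.induce {u, p, q, c}).induce {w | w ≠ x}).Reachable ⟨⟨c, hc⟩, hcx⟩ y := by
        rintro ⟨⟨y, hyS⟩, hyx⟩
        have hyu : y ≠ u := fun e => hyx (Subtype.ext (e.trans hx.symm))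
        rcases hyS with rfl | rfl | rfl | rfl
        · exact absurd rfl hyu
        · exact Adj.reachable (by exact hcp)
        · exact Adj.reachable (by exact hcq)
        · exact Reachable.refl _
      exact Connected.mk (fun y z => (reach y).symm.trans (reach z))
    · -- hub is u
      have hux : (⟨u, hu⟩ : ({u, p, q, c} : Set V)) ≠ x :=
        fun e => hx ((Subtype.ext_iff.1 e).symm)
      haveI : Nonempty ↑{w : ({u, p, q, c} : Set V) | w ≠ x} := ⟨⟨⟨u, hu⟩, hux⟩⟩
      have reach : ∀ y : {w : ({u, p, q, c} : Set V) | w ≠ x},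
          ((G.induce {u, p, q, c}).induce {w | w ≠ x}).Reachable ⟨⟨u, hu⟩, hux⟩ y := by
        rintro ⟨⟨y, hyS⟩, hyx⟩
        by_cases hyu : y = u
        · subst hyu; exact Reachable.refl _
        · exact Adj.reachable (by exact hubu y hyS hyu)
      exact Connected.mk (fun y z => (reach y).symm.trans (reach z))
  · -- not complete
    intro htop
    have : (G.induce ({u, p, q, c} : Set V)).Adj ⟨p, hp⟩ ⟨q, hq⟩ := by
      rw [htop]; exact fun e => hpqne (congrArg Subtype.val e)
    exact hpq this
  · -- not an odd cycle: |S| = 4 is even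
    rintro ⟨-, -, hodd⟩
    rw [hcard, Nat.odd_iff] at hodd
    norm_num at hodd
  · -- radius ≤ 1 from u
    rintro ⟨w, hw⟩
    by_cases hwu : w = u
    · subst hwu
      simp [SimpleGraph.dist_self]
    · have hadj : (G.induce ({u, p, q, c} : Set V)).Adj ⟨u, hu⟩ ⟨w, hw⟩ := by
        exact hubu w hw hwu
      simpa using SimpleGraph.dist_le hadj.toWalk

lemma diamond_false {V : Type*} [Fintype V] (G : SimpleGraph V) (r : ℕ)
    (h : NoSmallDCC G r) (hr : 1 ≤ r) (u p q c : V)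
    (hup : G.Adj u p) (huq : G.Adj u q) (huc : G.Adj u c)
    (hcp : G.Adj c p) (hcq : G.Adj c q) (hpq : ¬ G.Adj p q) (hpqne : p ≠ q) :
    False := by
  obtain ⟨hdcc, hrad⟩ := diamond_dcc G u p q c hup huq huc hcp hcq hpq hpqne
  exact h _ hdcc ⟨⟨u, by simp⟩, fun w => le_trans (hrad w) hr⟩

/-- No edges between distinct maximal cliques among the BFS children of a
vertex, in a graph with no DCC of radius at most r. -/
theorem stmt19 {V : Type*} [Fintype V] (G : SimpleGraph V) (r : ℕ)
    (h : NoSmallDCC G r) (v u : V) (t : ℕ) (ht : t + 1 ≤ r)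
    (hu : G.dist v u = t) (C C' : Set V)
    (hCchild : C ⊆ {w | G.Adj u w ∧ G.dist v w = t + 1})
    (hC : G.IsClique C)
    (hCmax : ∀ D, C ⊆ D → D ⊆ {w | G.Adj u w ∧ G.dist v w = t + 1} →
        G.IsClique D → D = C)
    (hC'child : C' ⊆ {w | G.Adj u w ∧ G.dist v w = t + 1})
    (hC' : G.IsClique C')
    (hC'max : ∀ D, C' ⊆ D → D ⊆ {w | G.Adj u w ∧ G.dist v w = t + 1} →
        G.IsClique D → D = C')
    (hne : C ≠ C') (a b : V) (ha : a ∈ C) (hb : b ∈ C') :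
    ¬ G.Adj a b := by
  intro hab
  have hr : 1 ≤ r := le_trans (by omega) ht
  -- children adjacency to u
  have hua : G.Adj u a := (hCchild ha).1
  have hub : G.Adj u b := (hC'child hb).1
  -- there exist nonadjacent x0 ∈ C, y0 ∈ C'
  have hsep : ∃ x0 ∈ C, ∃ y0 ∈ C', ¬ G.Adj x0 y0 ∧ x0 ≠ y0 := by
    by_contra hcon
    push_neg at hcon
    have hclique : G.IsClique (C ∪ C') := by
      intro x hx y hy hxy
      rcases hx with hx | hx <;> rcases hy with hy | hy
      · exact hC hx hy hxy
      · by_cases hadj : G.Adj x y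
        · exact hadj
        · exact absurd (hcon x hx y hy hadj) hxy
      · by_cases hadj : G.Adj y x
        · exact hadj.symm
        · exact absurd (hcon y hy x hx hadj).symm hxy
      · exact hC' hx hy hxy
    have e1 : C ∪ C' = C := hCmax _ Set.subset_union_left
      (Set.union_subset hCchild hC'child) hclique
    have e2 : C ∪ C' = C' := hC'max _ Set.subset_union_right
      (Set.union_subset hCchild hC'child) hclique
    exact hne (e1 ▸ e2)
  obtain ⟨x0, hx0, y0, hy0, hxy0, hxy0ne⟩ := hsep
  by_cases hcase1 : ∃ x ∈ C, x ≠ b ∧ ¬ G.Adj x b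
  · obtain ⟨x, hx, hxb, hxbadj⟩ := hcase1
    have hxa : x ≠ a := fun e => hxbadj (e ▸ hab)
    have hax : G.Adj a x := hC ha hx (Ne.symm hxa)
    exact diamond_false G r h hr u b x a hub ((hCchild hx).1) hua hab hax
      (fun e => hxbadj e.symm) hxb.symm
  · push_neg at hcase1
    -- b ∈ C
    have hbC : b ∈ C := by
      have : insert b C = C := hCmax _ (Set.subset_insert _ _)
        (Set.insert_subset (hC'child hb) hCchild)
        (by
          intro x hx y hy hxy
          rcases hx with hx | hx <;> rcases hy with hy | hy
          · exact absurd (hx.trans hy.symm) hxy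
          · by_cases hyb : y = b
            · exact absurd (hx.trans hyb.symm) hxy
            · rw [hx]; exact (hcase1 y hy hyb).symm
          · by_cases hxb : x = b
            · exact absurd (hxb.trans hy.symm) hxy
            · rw [hy]; exact hcase1 x hx hxb
          · exact hC hx hy hxy)
      rw [← this]; exact Set.mem_insert _ _
    by_cases hcase2 : ∃ y ∈ C', y ≠ a ∧ ¬ G.Adj y a
    · obtain ⟨y, hy, hya, hyaadj⟩ := hcase2
      have hyb : y ≠ b := fun e => hyaadj (e ▸ hab.symm)
      have hby : G.Adj b y := hC' hb hy (Ne.symm hyb)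
      exact diamond_false G r h hr u a y b hua ((hC'child hy).1) hub hab.symm hby
        (fun e => hyaadj e.symm) hya.symm
    · push_neg at hcase2
      have haC' : a ∈ C' := by
        have : insert a C' = C' := hC'max _ (Set.subset_insert _ _)
          (Set.insert_subset (hCchild ha) hC'child)
          (by
            intro x hx y hy hxy
            rcases hx with hx | hx <;> rcases hy with hy | hy
            · exact absurd (hx.trans hy.symm) hxy
            · by_cases hya : y = a
              · exact absurd (hx.trans hya.symm) hxy
              · rw [hx]; exact (hcase2 y hy hya).symm
            · by_cases hxa : x = a
              · exact absurd (hxa.trans hy.symm) hxy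
              · rw [hy]; exact hcase2 x hx hxa
            · exact hC' hx hy hxy)
        rw [← this]; exact Set.mem_insert _ _
      -- now a ∈ C ∩ C'; x0 ≠ a and y0 ≠ a, a is adjacent to both
      have hx0a : x0 ≠ a := by
        intro e; subst e
        exact hxy0 (hC' haC' hy0 hxy0ne)
      have hy0a : y0 ≠ a := by
        intro e; subst e
        exact hxy0 (hC hx0 ha hx0a)
      have hax0 : G.Adj a x0 := hC ha hx0 (Ne.symm hx0a)
      have hay0 : G.Adj a y0 := hC' haC' hy0 (Ne.symm hy0a)
      exact diamond_false G r h hr u x0 y0 a ((hCchild hx0).1) ((hC'child hy0).1) hua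
        hax0 hay0 hxy0 hxy0ne
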